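/- For κ > 1 and λ ∈ [0,2], there exists a constant C = C(κ,λ) such that for all w, z ∈ R^n: 0 ≤ F_κ(w,z) ≤ C |z-w|^λ (max(|w|,|z|))^{κ-λ}. -/

import Mathlib

open Real Set

open Real Set

lemma amgm2 {p s : ℝ} (hs : 0 ≤ s) (hp0 : 0 ≤ p) (hp1 : p ≤ 1) :
    s ^ p ≤ p * s + (1 - p) := by
  have h := Real.geom_mean_le_arith_mean2_weighted (w₁ := p) (w₂ := 1 - p) (p₁ := s)
    (p₂ := 1) hp0 (by linarith) hs zero_le_one (by ring)
  simpa using h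

lemma lip1 {κ m : ℝ} (hκ : 2 ≤ κ) {u v : ℝ} (hu : u ∈ Set.Icc 0 m)
    (hv : v ∈ Set.Icc 0 m) :
    |v ^ (κ - 1) - u ^ (κ - 1)| ≤ (κ - 1) * m ^ (κ - 2) * |v - u| := by
  have hdiff : ∀ x ∈ Set.Icc (0:ℝ) m, DifferentiableAt ℝ (fun s : ℝ => s ^ (κ - 1)) x :=
    fun x _ => (Real.hasDerivAt_rpow_const (Or.inr (by linarith))).differentiableAt
  have hb : ∀ x ∈ Set.Icc (0:ℝ) m, ‖deriv (fun s : ℝ => s ^ (κ - 1)) x‖ ≤ (κ - 1) * m ^ (κ - 2) := by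
    intro x hx
    have hd := (Real.hasDerivAt_rpow_const (x := x) (p := κ - 1) (Or.inr (by linarith))).deriv
    have he : κ - 1 - 1 = κ - 2 := by ring
    rw [hd, he, Real.norm_eq_abs, abs_mul, abs_of_nonneg (by linarith : (0:ℝ) ≤ κ - 1),
      abs_of_nonneg (Real.rpow_nonneg hx.1 _)]
    have : x ^ (κ - 2) ≤ m ^ (κ - 2) := Real.rpow_le_rpow hx.1 hx.2 (by linarith)
    nlinarith
  have := Convex.norm_image_sub_le_of_norm_deriv_le hdiff hb (convex_Icc 0 m) hu hv
  simpa [Real.norm_eq_abs] using this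

lemma oneD {κ m a b : ℝ} (hκ : 2 ≤ κ) (ha : a ∈ Set.Icc 0 m) (hb : b ∈ Set.Icc 0 m) :
    b ^ κ - a ^ κ - κ * a ^ (κ - 1) * (b - a) ≤ κ * (κ - 1) * m ^ (κ - 2) * (b - a) ^ 2 := by
  set c := κ * a ^ (κ - 1) with hc
  set f : ℝ → ℝ := fun s => s ^ κ - c * s with hf
  have hder : ∀ x : ℝ, HasDerivAt f (κ * x ^ (κ - 1) - c) x := by
    intro x
    have h1 := Real.hasDerivAt_rpow_const (x := x) (p := κ) (Or.inr (by linarith))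
    have h2 : HasDerivAt (fun s : ℝ => c * s) c x := by
      simpa using (hasDerivAt_id x).const_mul c
    exact h1.sub h2
  have hsub : Set.uIcc a b ⊆ Set.Icc 0 m := Set.uIcc_subset_Icc ha hb
  have hdiff : ∀ x ∈ Set.uIcc a b, DifferentiableAt ℝ f x := fun x _ => (hder x).differentiableAt
  have hbd : ∀ x ∈ Set.uIcc a b, ‖deriv f x‖ ≤ κ * ((κ - 1) * m ^ (κ - 2) * |b - a|) := by
    intro x hx
    rw [(hder x).deriv, hc, Real.norm_eq_abs, ← mul_sub, abs_mul,
      abs_of_nonneg (by linarith : (0:ℝ) ≤ κ)]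
    have h1 : |x ^ (κ - 1) - a ^ (κ - 1)| ≤ (κ - 1) * m ^ (κ - 2) * |x - a| :=
      lip1 hκ ha (hsub hx)
    have h2 : |x - a| ≤ |b - a| := by
      rcases le_total a b with hab | hab
      · rw [Set.uIcc_of_le hab] at hx
        rw [abs_of_nonneg (by linarith [hx.1] : (0:ℝ) ≤ x - a),
          abs_of_nonneg (by linarith : (0:ℝ) ≤ b - a)]
        linarith [hx.2]
      · rw [Set.uIcc_of_ge hab] at hx
        rw [abs_of_nonpos (by linarith [hx.2] : x - a ≤ 0),
          abs_of_nonpos (by linarith : b - a ≤ 0)]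
        linarith [hx.1]
    have hm2 : (0:ℝ) ≤ m ^ (κ - 2) := Real.rpow_nonneg (le_trans ha.1 ha.2) _
    have : |x ^ (κ - 1) - a ^ (κ - 1)| ≤ (κ - 1) * m ^ (κ - 2) * |b - a| := by
      calc |x ^ (κ - 1) - a ^ (κ - 1)| ≤ (κ - 1) * m ^ (κ - 2) * |x - a| := h1
        _ ≤ (κ - 1) * m ^ (κ - 2) * |b - a| :=
            mul_le_mul_of_nonneg_left h2 (mul_nonneg (by linarith) hm2)
    nlinarith [abs_nonneg (x ^ (κ - 1) - a ^ (κ - 1))]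
  have hkey := Convex.norm_image_sub_le_of_norm_deriv_le hdiff hbd (convex_uIcc a b)
    Set.left_mem_uIcc Set.right_mem_uIcc
  rw [Real.norm_eq_abs, Real.norm_eq_abs] at hkey
  have hfb : f b - f a = b ^ κ - a ^ κ - c * (b - a) := by simp only [hf]; ring
  have h1 : f b - f a ≤ |f b - f a| := le_abs_self _
  have h2 : κ * ((κ - 1) * m ^ (κ - 2) * |b - a|) * |b - a|
      = κ * (κ - 1) * m ^ (κ - 2) * (b - a) ^ 2 := by
    rw [show κ * ((κ - 1) * m ^ (κ - 2) * |b - a|) * |b - a|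
        = κ * (κ - 1) * m ^ (κ - 2) * (|b - a| * |b - a|) by ring, abs_mul_abs_self, sq]
  calc b ^ κ - a ^ κ - κ * a ^ (κ - 1) * (b - a) = f b - f a := by rw [hfb, hc]
    _ ≤ |f b - f a| := h1
    _ ≤ κ * ((κ - 1) * m ^ (κ - 2) * |b - a|) * |b - a| := hkey
    _ = _ := h2

noncomputable def bregmanF (n : ℕ) (κ : ℝ) (w z : EuclideanSpace ℝ (Fin n)) : ℝ :=
  ‖z‖ ^ κ - ‖w‖ ^ κ - κ * ‖w‖ ^ (κ - 2) * (inner ℝ w (z - w) : ℝ)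

lemma expandF (n : ℕ) (κ : ℝ) (hκ : 1 < κ) (w z : EuclideanSpace ℝ (Fin n)) :
    bregmanF n κ w z
      = ‖z‖ ^ κ + (κ - 1) * ‖w‖ ^ κ - κ * ‖w‖ ^ (κ - 2) * (inner ℝ w z : ℝ) := by
  unfold bregmanF
  rw [inner_sub_right, real_inner_self_eq_norm_sq]
  rcases eq_or_lt_of_le (norm_nonneg w) with h0 | hx
  · have hw : w = 0 := by rwa [eq_comm, norm_eq_zero] at h0
    simp [hw, Real.zero_rpow (show κ ≠ 0 by linarith)]
  · have hxx : ‖w‖ ^ (κ - 2) * ‖w‖ ^ (2:ℕ) = ‖w‖ ^ κ := by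
      rw [← Real.rpow_natCast ‖w‖ 2, ← Real.rpow_add hx]
      norm_num
    push_cast at hxx ⊢
    linear_combination κ * hxx

lemma F_le (n : ℕ) (κ : ℝ) (hκ : 1 < κ) (w z : EuclideanSpace ℝ (Fin n)) :
    bregmanF n κ w z ≤ (‖z‖ ^ κ - ‖w‖ ^ κ - κ * ‖w‖ ^ (κ - 1) * (‖z‖ - ‖w‖))
      + κ / 2 * ‖w‖ ^ (κ - 2) * ‖z - w‖ ^ 2 := by
  rw [expandF n κ hκ]
  set x := ‖w‖
  set y := ‖z‖
  set t := ‖z - w‖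
  set p : ℝ := inner ℝ w z
  have htt : t ^ 2 = y ^ 2 - 2 * p + x ^ 2 := by
    have h := norm_sub_sq_real z w
    rw [real_inner_comm w z] at h
    exact h
  rcases eq_or_lt_of_le (norm_nonneg w) with h0 | hx
  · have hw : w = 0 := by rwa [eq_comm, norm_eq_zero] at h0
    have hx0 : x = 0 := by simp [x, hw]
    have hp0 : p = 0 := by simp [p, hw]
    have e1 : x ^ κ = 0 := by rw [hx0]; exact Real.zero_rpow (by linarith)
    have e2 : x ^ (κ - 1) = 0 := by rw [hx0]; exact Real.zero_rpow (by linarith)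
    have e3 : (0:ℝ) ≤ x ^ (κ - 2) := Real.rpow_nonneg (norm_nonneg w) _
    rw [hp0, e1, e2]
    nlinarith [mul_nonneg (mul_nonneg (by linarith : (0:ℝ) ≤ κ) e3) (sq_nonneg t)]
  · have e1 : x ^ κ = x ^ (κ - 2) * x ^ 2 := by
      rw [← Real.rpow_natCast x 2, ← Real.rpow_add hx]
      norm_num
      rfl
    have e2 : x ^ (κ - 1) = x ^ (κ - 2) * x := by
      nth_rewrite 3 [← Real.rpow_one x]
      rw [← Real.rpow_add hx]
      congr 1
      ring
    have e3 : (0:ℝ) ≤ x ^ (κ - 2) := Real.rpow_nonneg (norm_nonneg w) _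
    rw [e1, e2, htt]
    nlinarith [mul_nonneg (mul_nonneg (by linarith : (0:ℝ) ≤ κ) e3) (sq_nonneg (y - x))]

lemma amgm2' {p s : ℝ} (hs : 0 ≤ s) (hp0 : 0 ≤ p) (hp1 : p ≤ 1) :
    s ^ p ≤ p * s + (1 - p) := by
  have h := Real.geom_mean_le_arith_mean2_weighted (w₁ := p) (w₂ := 1 - p) (p₁ := s)
    (p₂ := 1) hp0 (by linarith) hs zero_le_one (by ring)
  simpa using h

lemma key_lt2 {κ x y : ℝ} (hκ1 : 1 < κ) (hκ2 : κ ≤ 2) (hx : 0 < x) (hy : 0 ≤ y) :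
    y ^ κ ≤ κ / 2 * (x ^ (κ - 2) * y ^ 2) + (1 - κ / 2) * x ^ κ := by
  have hA : (0:ℝ) ≤ x ^ (κ - 2) * y ^ 2 := by positivity
  have hB : (0:ℝ) ≤ x ^ κ := by positivity
  have g := Real.geom_mean_le_arith_mean2_weighted (w₁ := κ / 2) (w₂ := 1 - κ / 2)
    (p₁ := x ^ (κ - 2) * y ^ 2) (p₂ := x ^ κ) (by linarith) (by linarith) hA hB (by ring)
  have f1 : (x ^ (κ - 2) * y ^ 2) ^ (κ / 2) = x ^ ((κ - 2) * (κ / 2)) * y ^ κ := by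
    rw [Real.mul_rpow (by positivity) (by positivity), ← Real.rpow_natCast y 2,
      ← Real.rpow_mul hy, ← Real.rpow_mul hx.le]
    congr 2
    push_cast
    ring
  have f2 : (x ^ κ) ^ (1 - κ / 2) = x ^ (κ * (1 - κ / 2)) := (Real.rpow_mul hx.le _ _).symm
  have f : (x ^ (κ - 2) * y ^ 2) ^ (κ / 2) * (x ^ κ) ^ (1 - κ / 2) = y ^ κ := by
    rw [f1, f2, mul_comm (x ^ ((κ - 2) * (κ / 2))) (y ^ κ), mul_assoc, ← Real.rpow_add hx,
      show (κ - 2) * (κ / 2) + κ * (1 - κ / 2) = 0 by ring, Real.rpow_zero, mul_one]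
  calc y ^ κ = (x ^ (κ - 2) * y ^ 2) ^ (κ / 2) * (x ^ κ) ^ (1 - κ / 2) := f.symm
    _ ≤ _ := g

lemma conv1 {t M κ lam : ℝ} (ht : 0 < t) (hM : 0 < M) (htM : t ≤ 2 * M)
    (h0 : 0 ≤ lam) (h2 : lam ≤ 2) :
    t ^ 2 * M ^ (κ - 2) ≤ 4 * (t ^ lam * M ^ (κ - lam)) := by
  have enat : t ^ ((2:ℕ):ℝ) = t ^ (2:ℕ) := Real.rpow_natCast t 2
  have e1 : t ^ (2:ℕ) = t ^ lam * t ^ (2 - lam) := by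
    rw [← enat, ← Real.rpow_add ht]
    norm_num
  have e2 : t ^ (2 - lam) ≤ (2 * M) ^ (2 - lam) := Real.rpow_le_rpow ht.le htM (by linarith)
  have e3 : ((2:ℝ) * M) ^ (2 - lam) = 2 ^ (2 - lam) * M ^ (2 - lam) :=
    Real.mul_rpow (by norm_num) hM.le
  have e4 : (2:ℝ) ^ (2 - lam) ≤ 4 := by
    calc (2:ℝ) ^ (2 - lam) ≤ 2 ^ ((2:ℕ):ℝ) :=
          Real.rpow_le_rpow_of_exponent_le one_le_two (by push_cast; linarith)
      _ = 4 := by rw [Real.rpow_natCast]; norm_num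
  have e5 : M ^ (2 - lam) * M ^ (κ - 2) = M ^ (κ - lam) := by
    rw [← Real.rpow_add hM]
    congr 1
    ring
  calc t ^ 2 * M ^ (κ - 2) = t ^ lam * t ^ (2 - lam) * M ^ (κ - 2) := by rw [e1]
    _ ≤ t ^ lam * (2 ^ (2 - lam) * M ^ (2 - lam)) * M ^ (κ - 2) := by
        rw [← e3]
        exact mul_le_mul_of_nonneg_right
          (mul_le_mul_of_nonneg_left e2 (Real.rpow_nonneg ht.le _))
          (Real.rpow_nonneg hM.le _)
    _ = 2 ^ (2 - lam) * (t ^ lam * (M ^ (2 - lam) * M ^ (κ - 2))) := by ring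
    _ = 2 ^ (2 - lam) * (t ^ lam * M ^ (κ - lam)) := by rw [e5]
    _ ≤ 4 * (t ^ lam * M ^ (κ - lam)) := by
        apply mul_le_mul_of_nonneg_right e4
        positivity

lemma conv2 {t M κ lam : ℝ} (ht : 0 < t) (hM : 0 < M) (hMt : M ≤ 2 * t)
    (h0 : 0 ≤ lam) (h2 : lam ≤ 2) :
    M ^ κ ≤ 4 * (t ^ lam * M ^ (κ - lam)) := by
  have e1 : M ^ κ = M ^ lam * M ^ (κ - lam) := by
    rw [← Real.rpow_add hM]
    congr 1
    ring
  have e2 : M ^ lam ≤ (2 * t) ^ lam := Real.rpow_le_rpow hM.le hMt h0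
  have e3 : ((2:ℝ) * t) ^ lam = 2 ^ lam * t ^ lam := Real.mul_rpow (by norm_num) ht.le
  have e4 : (2:ℝ) ^ lam ≤ 4 := by
    calc (2:ℝ) ^ lam ≤ 2 ^ ((2:ℕ):ℝ) :=
          Real.rpow_le_rpow_of_exponent_le one_le_two (by push_cast; linarith)
      _ = 4 := by rw [Real.rpow_natCast]; norm_num
  calc M ^ κ = M ^ lam * M ^ (κ - lam) := e1
    _ ≤ (2 ^ lam * t ^ lam) * M ^ (κ - lam) :=
        mul_le_mul_of_nonneg_right (e2.trans_eq e3) (Real.rpow_nonneg hM.le _)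
    _ = 2 ^ lam * (t ^ lam * M ^ (κ - lam)) := by ring
    _ ≤ 4 * (t ^ lam * M ^ (κ - lam)) := by
        apply mul_le_mul_of_nonneg_right e4
        positivity

lemma F_nonneg (n : ℕ) (κ : ℝ) (hκ : 1 < κ) (w z : EuclideanSpace ℝ (Fin n)) :
    0 ≤ bregmanF n κ w z := by
  rw [expandF n κ hκ]
  set x := ‖w‖
  set y := ‖z‖
  set p : ℝ := inner ℝ w z
  have hy0 : 0 ≤ y := norm_nonneg z
  rcases eq_or_lt_of_le (norm_nonneg w) with h0 | hx
  · have hw : w = 0 := by rwa [eq_comm, norm_eq_zero] at h0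
    have hp0 : p = 0 := by simp [p, hw]
    have e1 : x ^ κ = 0 := by
      rw [show x = 0 from h0.symm]
      exact Real.zero_rpow (by linarith)
    rw [hp0, e1]
    have : (0:ℝ) ≤ y ^ κ := Real.rpow_nonneg hy0 _
    linarith
  · have e2 : x ^ (κ - 1) = x ^ (κ - 2) * x := by
      nth_rewrite 3 [← Real.rpow_one x]
      rw [← Real.rpow_add hx]
      congr 1
      ring
    have hA : (0:ℝ) ≤ x ^ (κ - 2) := Real.rpow_nonneg hx.le _
    have hxκ : (0:ℝ) ≤ x ^ κ := Real.rpow_nonneg hx.le _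
    have hyκ : (0:ℝ) ≤ y ^ κ := Real.rpow_nonneg hy0 _
    have hp : p ≤ x * y := real_inner_le_norm w z
    have h1 : κ * x ^ (κ - 2) * p ≤ κ * x ^ (κ - 2) * (x * y) := by
      apply mul_le_mul_of_nonneg_left hp
      positivity
    have young : x ^ (κ - 1) * y ≤ (κ - 1) / κ * x ^ κ + 1 / κ * y ^ κ := by
      have g := Real.geom_mean_le_arith_mean2_weighted (w₁ := (κ - 1) / κ) (w₂ := 1 / κ)
        (p₁ := x ^ κ) (p₂ := y ^ κ) (div_nonneg (by linarith) (by linarith))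
        (div_nonneg (by linarith) (by linarith)) hxκ hyκ
        (by rw [← add_div, show κ - 1 + 1 = κ by ring]
            exact div_self (by linarith))
      have f1 : (x ^ κ) ^ ((κ - 1) / κ) = x ^ (κ - 1) := by
        rw [← Real.rpow_mul hx.le]
        congr 1
        field_simp
      have f2 : (y ^ κ) ^ ((1:ℝ) / κ) = y := by
        rw [← Real.rpow_mul hy0, show κ * (1 / κ) = 1 by field_simp, Real.rpow_one]
      rwa [f1, f2] at g
    have young' : κ * (x ^ (κ - 1) * y) ≤ κ * ((κ - 1) / κ * x ^ κ + 1 / κ * y ^ κ) :=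
      mul_le_mul_of_nonneg_left young (by linarith)
    have hid : κ * ((κ - 1) / κ * x ^ κ + 1 / κ * y ^ κ) = (κ - 1) * x ^ κ + y ^ κ := by
      field_simp
    rw [e2] at young'
    rw [hid] at young'
    nlinarith [h1, young']

set_option maxHeartbeats 2000000 in
lemma main_scalar (κ lam x y t p F : ℝ) (hκ : 1 < κ) (hlam0 : 0 ≤ lam) (hlam2 : lam ≤ 2)
    (hx0 : 0 ≤ x) (hy0 : 0 ≤ y) (ht : 0 < t)
    (hd : |y - x| ≤ t) (htxy : t ≤ y + x)
    (hexp : F = y ^ κ + (κ - 1) * x ^ κ - κ * x ^ (κ - 2) * p)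
    (hFle : F ≤ y ^ κ - x ^ κ - κ * x ^ (κ - 1) * (y - x) + κ / 2 * x ^ (κ - 2) * t ^ 2)
    (hpn : |p| ≤ x * y)
    (hx_or : x = 0 → y = t) :
    F ≤ (8 * κ ^ 2 + 8 * κ + 8) * t ^ lam * max x y ^ (κ - lam) := by
  obtain ⟨M, hMdef⟩ : ∃ M, M = max x y := ⟨_, rfl⟩
  rw [← hMdef]
  have hxM : x ≤ M := hMdef ▸ le_max_left x y
  have hyM : y ≤ M := hMdef ▸ le_max_right x y
  have hM0 : 0 ≤ M := le_trans hx0 hxM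
  have ht2M : t ≤ 2 * M := by linarith
  have hMpos : 0 < M := by linarith
  have hP : (0:ℝ) ≤ t ^ lam * M ^ (κ - lam) :=
    mul_nonneg (Real.rpow_nonneg ht.le _) (Real.rpow_nonneg hM0 _)
  have hconv : t ^ 2 * M ^ (κ - 2) ≤ 4 * (t ^ lam * M ^ (κ - lam)) :=
    conv1 ht hMpos ht2M hlam0 hlam2
  have hdt : (y - x) ^ 2 ≤ t ^ 2 := by
    nlinarith [hd, abs_nonneg (y - x), sq_abs (y - x)]
  rcases le_or_gt 2 κ with hκ2 | hκ2
  · -- κ ≥ 2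
    have hD := oneD (κ := κ) (m := M) (a := x) (b := y) hκ2 ⟨hx0, hxM⟩ ⟨hy0, hyM⟩
    have hxk : x ^ (κ - 2) ≤ M ^ (κ - 2) := Real.rpow_le_rpow hx0 hxM (by linarith)
    have hMk : (0:ℝ) ≤ M ^ (κ - 2) := Real.rpow_nonneg hM0 _
    have s1 : κ * (κ - 1) * M ^ (κ - 2) * (y - x) ^ 2 ≤ κ * (κ - 1) * M ^ (κ - 2) * t ^ 2 := by
      apply mul_le_mul_of_nonneg_left hdt
      have : (0:ℝ) ≤ κ * (κ - 1) := by nlinarith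
      exact mul_nonneg this hMk
    have s2 : κ / 2 * x ^ (κ - 2) * t ^ 2 ≤ κ / 2 * M ^ (κ - 2) * t ^ 2 := by
      apply mul_le_mul_of_nonneg_right _ (sq_nonneg t)
      exact mul_le_mul_of_nonneg_left hxk (by linarith)
    have hFb : F ≤ (κ * (κ - 1) + κ / 2) * (t ^ 2 * M ^ (κ - 2)) := by
      linarith [hFle, hD, s1, s2]
    have hcoef : (0:ℝ) ≤ κ * (κ - 1) + κ / 2 := by nlinarith
    have hFc : F ≤ (κ * (κ - 1) + κ / 2) * (4 * (t ^ lam * M ^ (κ - lam))) :=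
      hFb.trans (mul_le_mul_of_nonneg_left hconv hcoef)
    have hfin : (0:ℝ) ≤ (4 * κ ^ 2 + 10 * κ + 8) := by nlinarith
    linarith [hFc, mul_nonneg hfin hP]
  · -- κ < 2
    rcases eq_or_lt_of_le hx0 with hx | hx
    · -- x = 0
      have hx' : x = 0 := hx.symm
      have hty : y = t := hx_or hx'
      have hMy : M = y := by
        rw [hMdef, hx']
        exact max_eq_right hy0
      have hF : F = y ^ κ := by
        rw [hexp, hx', Real.zero_rpow (show κ ≠ 0 by linarith),
          Real.zero_rpow (show κ - 2 ≠ 0 by linarith)]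
        ring
      have hye : y ^ κ = t ^ lam * M ^ (κ - lam) := by
        rw [hMy, ← hty, ← Real.rpow_add (by rw [hty]; exact ht)]
        congr 1
        ring
      rw [hF, hye]
      have hc1 : (0:ℝ) ≤ 8 * κ ^ 2 + 8 * κ + 7 := by nlinarith
      linarith [mul_nonneg hc1 hP]
    · -- x > 0
      have e1 : x ^ κ = x ^ (κ - 2) * x ^ 2 := by
        rw [← Real.rpow_natCast x 2, ← Real.rpow_add hx]
        norm_num
      have e2 : x ^ (κ - 1) = x ^ (κ - 2) * x := by
        nth_rewrite 3 [← Real.rpow_one x]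
        rw [← Real.rpow_add hx]
        congr 1
        ring
      have hA : (0:ℝ) ≤ x ^ (κ - 2) := Real.rpow_nonneg hx0 _
      have hkey := key_lt2 hκ hκ2.le hx hy0
      have s1 : κ / 2 * (x ^ (κ - 2) * (y - x) ^ 2) ≤ κ / 2 * (x ^ (κ - 2) * t ^ 2) := by
        apply mul_le_mul_of_nonneg_left _ (by linarith : (0:ℝ) ≤ κ / 2)
        exact mul_le_mul_of_nonneg_left hdt hA
      rw [e1] at hkey
      rw [e1, e2] at hFle
      have hF2 : F ≤ κ * (x ^ (κ - 2) * t ^ 2) := by linarith [hFle, hkey, s1]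
      rcases le_or_gt M (2 * x) with hcase | hcase
      · -- M ≤ 2x
        have h1 : M / 2 ≤ x := by linarith
        have h1pos : (0:ℝ) < M / 2 := by linarith
        have h2 : x ^ (κ - 2) ≤ (M / 2) ^ (κ - 2) :=
          Real.rpow_le_rpow_of_nonpos h1pos h1 (by linarith)
        have h3 : (M / 2) ^ (κ - 2) = M ^ (κ - 2) / 2 ^ (κ - 2) :=
          Real.div_rpow hM0 (by norm_num) _
        have h4 : (1:ℝ) ≤ 2 ^ (κ - 2) * 2 := by
          have h5 : (2:ℝ) ^ (-(1:ℝ)) ≤ 2 ^ (κ - 2) :=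
            Real.rpow_le_rpow_of_exponent_le one_le_two (by linarith)
          have h6 : (2:ℝ) ^ (-(1:ℝ)) = 1 / 2 := by
            rw [Real.rpow_neg (by norm_num), Real.rpow_one]
            norm_num
          rw [h6] at h5
          linarith
        have h2pos : (0:ℝ) < 2 ^ (κ - 2) := Real.rpow_pos_of_pos (by norm_num) _
        have h7 : x ^ (κ - 2) ≤ 2 * M ^ (κ - 2) := by
          have hMk : (0:ℝ) ≤ M ^ (κ - 2) := Real.rpow_nonneg hM0 _
          have : M ^ (κ - 2) / 2 ^ (κ - 2) ≤ 2 * M ^ (κ - 2) := by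
            rw [div_le_iff₀ h2pos]
            nlinarith
          linarith [h2.trans_eq h3]
        have s2 : κ * (x ^ (κ - 2) * t ^ 2) ≤ κ * (2 * M ^ (κ - 2) * t ^ 2) := by
          apply mul_le_mul_of_nonneg_left _ (by linarith : (0:ℝ) ≤ κ)
          exact mul_le_mul_of_nonneg_right h7 (sq_nonneg t)
        have hF3 : F ≤ 2 * κ * (t ^ 2 * M ^ (κ - 2)) := by linarith [hF2, s2]
        have hF4 : F ≤ 2 * κ * (4 * (t ^ lam * M ^ (κ - lam))) :=
          hF3.trans (mul_le_mul_of_nonneg_left hconv (by linarith))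
        have hfin : (0:ℝ) ≤ 8 * κ ^ 2 + 8 := by nlinarith
        linarith [hF4, mul_nonneg hfin hP]
      · -- M > 2x
        have hxM' : x < M := by linarith
        have hMy : M = y := by
          rcases max_cases x y with ⟨h1, h2⟩ | ⟨h1, _⟩
          · exfalso
            have hMx : M = x := hMdef.trans h1
            linarith
          · exact hMdef.trans h1
        have hMt : M ≤ 2 * t := by
          have hyx : y - x ≤ t := (abs_le.mp hd).2
          linarith [hMy ▸ hyx]
        have hpn' : -p ≤ x * y := by
          have := (abs_le.mp hpn).1
          linarith
        have u1 : -(κ * x ^ (κ - 2) * p) ≤ κ * (x ^ (κ - 2) * (x * y)) := by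
          have h := mul_le_mul_of_nonneg_left hpn'
            (mul_nonneg (by linarith : (0:ℝ) ≤ κ) hA)
          nlinarith [h]
        have u2 : x ^ (κ - 1) * y ≤ M ^ (κ - 1) * M :=
          mul_le_mul (Real.rpow_le_rpow hx0 hxM (by linarith)) hyM hy0
            (Real.rpow_nonneg hM0 _)
        have u3 : M ^ (κ - 1) * M = M ^ κ := by
          nth_rewrite 2 [← Real.rpow_one M]
          rw [← Real.rpow_add hMpos]
          congr 1
          ring
        have u4 : y ^ κ ≤ M ^ κ := Real.rpow_le_rpow hy0 hyM (by linarith)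
        have u5 : x ^ κ ≤ M ^ κ := Real.rpow_le_rpow hx0 hxM (by linarith)
        have u6 : κ * (x ^ (κ - 2) * (x * y)) ≤ κ * M ^ κ := by
          apply mul_le_mul_of_nonneg_left _ (by linarith : (0:ℝ) ≤ κ)
          calc x ^ (κ - 2) * (x * y) = x ^ (κ - 1) * y := by rw [e2]; ring
            _ ≤ M ^ (κ - 1) * M := u2
            _ = M ^ κ := u3
        have u7 : (κ - 1) * x ^ κ ≤ (κ - 1) * M ^ κ :=
          mul_le_mul_of_nonneg_left u5 (by linarith)
        have hF3 : F ≤ 2 * κ * M ^ κ := by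
          rw [hexp]
          linarith [u1, u6, u7, u4]
        have hF4 : F ≤ 2 * κ * (4 * (t ^ lam * M ^ (κ - lam))) :=
          hF3.trans (mul_le_mul_of_nonneg_left
            (conv2 ht hMpos hMt hlam0 hlam2) (by linarith))
        have hfin : (0:ℝ) ≤ 8 * κ ^ 2 + 8 := by nlinarith
        linarith [hF4, mul_nonneg hfin hP]

theorem bregman_upper_bound (n : ℕ) (κ lam : ℝ) (hκ : 1 < κ)
    (hlam : lam ∈ Set.Icc (0 : ℝ) 2) :
    ∃ C : ℝ, 0 < C ∧ ∀ w z : EuclideanSpace ℝ (Fin n),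
      0 ≤ bregmanF n κ w z ∧
      bregmanF n κ w z ≤ C * ‖z - w‖ ^ lam * (max ‖w‖ ‖z‖) ^ (κ - lam) := by
  obtain ⟨hlam0, hlam2⟩ := hlam
  refine ⟨8 * κ ^ 2 + 8 * κ + 8, by nlinarith, ?_⟩
  intro w z
  refine ⟨F_nonneg n κ hκ w z, ?_⟩
  have ht0 : 0 ≤ ‖z - w‖ := norm_nonneg _
  have hFle := F_le n κ hκ w z
  rcases eq_or_lt_of_le ht0 with ht | ht
  · -- ‖z - w‖ = 0, i.e. z = w
    have hzw : z = w := by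
      have h1 : z - w = 0 := by
        rw [← norm_eq_zero]
        exact ht.symm
      exact sub_eq_zero.mp h1
    rw [hzw] at hFle ⊢
    simp only [sub_self, norm_zero] at hFle
    norm_num at hFle
    have hc : (0:ℝ) ≤ 8 * κ ^ 2 + 8 * κ + 8 := by nlinarith
    have h1 : (0:ℝ) ≤ ‖w - w‖ ^ lam := Real.rpow_nonneg (norm_nonneg _) _
    have h2 : (0:ℝ) ≤ max ‖w‖ ‖w‖ ^ (κ - lam) :=
      Real.rpow_nonneg (le_trans (norm_nonneg w) (le_max_left _ _)) _
    have hprod := mul_nonneg (mul_nonneg hc h1) h2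
    linarith [hFle, hprod]
  · -- ‖z - w‖ > 0
    apply main_scalar κ lam ‖w‖ ‖z‖ ‖z - w‖ (inner ℝ w z : ℝ) (bregmanF n κ w z) hκ hlam0 hlam2
      (norm_nonneg w) (norm_nonneg z) ht (abs_norm_sub_norm_le z w) (norm_sub_le z w)
      (expandF n κ hκ w z) (F_le n κ hκ w z) (abs_real_inner_le_norm w z)
    intro hw0
    have hw : w = 0 := by rwa [norm_eq_zero] at hw0
    rw [hw, sub_zero]
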